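/- arXiv:1705.00255 — 5 statements merged into one kernel-verified Lean document; each statement's English description precedes it below -/
import Mathlib

section
/- Fix γ > 1 and define q_n(x) = n^{1/γ} on (0, 1/n) and 0 elsewhere. Then ∫₀¹ q_n^γ dx = 1 for all n, yet for every z ∈ W¹₂[0,1] one has ∫₀¹ q_n z dx → 0 as n → ∞. -/
open MeasureTheory Real Filter Set

/-- For `γ > 1` and `q_n = n^{1/γ}·𝟙_{(0,1/n)}` one has `∫₀¹ q_n^γ = 1` for all `n ≥ 1`,
yet `∫₀¹ q_n z dx → 0` for every `z ∈ W¹₂[0,1]`. -/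
theorem stmt8 (γ : ℝ) (hγ : 1 < γ)
    (q : ℕ → ℝ → ℝ)
    (hq : ∀ n x, q n x = if x ∈ Ioo (0:ℝ) (1/(n:ℝ)) then (n:ℝ) ^ (1/γ) else 0) :
    (∀ n : ℕ, 1 ≤ n → ∫ x in (0:ℝ)..1, (q n x) ^ γ = 1) ∧
    (∀ z z' : ℝ → ℝ,
      (∀ x ∈ Icc (0:ℝ) 1, HasDerivAt z (z' x) x) →
      IntervalIntegrable (fun x => (z' x)^2) volume 0 1 →
      Tendsto (fun n : ℕ => ∫ x in (0:ℝ)..1, q n x * z x) atTop (nhds 0)) := by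
  have hγ0 : γ ≠ 0 := by linarith
  constructor
  · intro n hn
    have hn0 : (0:ℝ) < n := by exact_mod_cast hn
    have hb1 : 1/(n:ℝ) ≤ 1 := by
      rw [div_le_one hn0]; exact_mod_cast hn
    have hpow : ((n:ℝ) ^ (1/γ)) ^ γ = (n:ℝ) := by
      rw [← Real.rpow_mul hn0.le, one_div_mul_cancel hγ0, Real.rpow_one]
    have hsub : Ioo (0:ℝ) (1/(n:ℝ)) ⊆ Ioc 0 1 := fun x hx => ⟨hx.1, hx.2.le.trans hb1⟩
    have heq : (fun x => (q n x) ^ γ) = (Ioo (0:ℝ) (1/(n:ℝ))).indicator (fun _ => (n:ℝ)) := by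
      funext x
      rw [hq, Set.indicator_apply]
      by_cases hx : x ∈ Ioo (0:ℝ) (1/(n:ℝ))
      · rw [if_pos hx, if_pos hx, hpow]
      · rw [if_neg hx, if_neg hx, Real.zero_rpow hγ0]
    rw [heq, intervalIntegral.integral_of_le (by norm_num : (0:ℝ) ≤ 1),
        integral_indicator measurableSet_Ioo, Measure.restrict_restrict measurableSet_Ioo,
        inter_eq_left.mpr hsub]
    rw [setIntegral_const, measureReal_def, Real.volume_Ioo]
    simp only [smul_eq_mul, sub_zero]
    rw [ENNReal.toReal_ofReal (by positivity)]
    field_simp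
  · intro z z' hz _
    have hcont : ContinuousOn z (Icc 0 1) := fun x hx =>
      (hz x hx).continuousAt.continuousWithinAt
    obtain ⟨C, hC⟩ := isCompact_Icc.exists_bound_of_continuousOn hcont
    have hC0 : 0 ≤ C := le_trans (norm_nonneg _) (hC 0 (by norm_num))
    have key : ∀ n : ℕ, 1 ≤ n → ‖∫ x in (0:ℝ)..1, q n x * z x‖ ≤ C * (n:ℝ) ^ (1/γ - 1) := by
      intro n hn
      have hn0 : (0:ℝ) < n := by exact_mod_cast hn
      have hb1 : 1/(n:ℝ) ≤ 1 := by
        rw [div_le_one hn0]; exact_mod_cast hn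
      have hsub : Ioo (0:ℝ) (1/(n:ℝ)) ⊆ Ioc 0 1 := fun x hx => ⟨hx.1, hx.2.le.trans hb1⟩
      have hsub' : Ioo (0:ℝ) (1/(n:ℝ)) ⊆ Icc 0 1 := fun x hx => ⟨hx.1.le, hx.2.le.trans hb1⟩
      have heq : (fun x => q n x * z x)
          = (Ioo (0:ℝ) (1/(n:ℝ))).indicator (fun x => (n:ℝ) ^ (1/γ) * z x) := by
        funext x
        rw [hq, Set.indicator_apply]
        by_cases hx : x ∈ Ioo (0:ℝ) (1/(n:ℝ))
        · rw [if_pos hx, if_pos hx]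
        · rw [if_neg hx, if_neg hx, zero_mul]
      rw [heq, intervalIntegral.integral_of_le (by norm_num : (0:ℝ) ≤ 1),
          integral_indicator measurableSet_Ioo, Measure.restrict_restrict measurableSet_Ioo,
          inter_eq_left.mpr hsub]
      have hbnd : ‖∫ x in Ioo (0:ℝ) (1/(n:ℝ)), (n:ℝ) ^ (1/γ) * z x‖
          ≤ ((n:ℝ) ^ (1/γ) * C) * (volume (Ioo (0:ℝ) (1/(n:ℝ)))).toReal := by
        apply norm_setIntegral_le_of_norm_le_const
        · rw [Real.volume_Ioo]; exact ENNReal.ofReal_lt_top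
        · intro x hx
          rw [norm_mul]
          have hx' : x ∈ Icc (0:ℝ) 1 := ⟨hx.1.le, hx.2.le.trans hb1⟩
          have : ‖(n:ℝ) ^ (1/γ)‖ = (n:ℝ) ^ (1/γ) := by
            rw [Real.norm_eq_abs, abs_of_nonneg (Real.rpow_nonneg hn0.le _)]
          rw [this]
          exact mul_le_mul_of_nonneg_left (hC x hx') (Real.rpow_nonneg hn0.le _)
      calc ‖∫ x in Ioo (0:ℝ) (1/(n:ℝ)), (n:ℝ) ^ (1/γ) * z x‖
          ≤ ((n:ℝ) ^ (1/γ) * C) * (volume (Ioo (0:ℝ) (1/(n:ℝ)))).toReal := hbnd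
        _ = C * (n:ℝ) ^ (1/γ - 1) := by
            rw [Real.volume_Ioo, sub_zero, ENNReal.toReal_ofReal (by positivity)]
            rw [Real.rpow_sub hn0, Real.rpow_one]
            field_simp
    have h1 : (0:ℝ) < 1 - 1/γ := by
      have : 1/γ < 1 := by
        rw [div_lt_one (by linarith)]; exact hγ
      linarith
    have hlim : Tendsto (fun n : ℕ => C * (n:ℝ) ^ (1/γ - 1)) atTop (nhds 0) := by
      have h2 := (tendsto_rpow_neg_atTop h1).comp tendsto_natCast_atTop_atTop
      have h3 : Tendsto (fun n : ℕ => (n:ℝ) ^ (1/γ - 1)) atTop (nhds 0) := by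
        have he : (fun n : ℕ => (n:ℝ) ^ (1/γ - 1))
            = (fun x : ℝ => x ^ (-(1 - 1/γ))) ∘ (Nat.cast) := by
          funext n; show (n:ℝ) ^ (1/γ - 1) = (n:ℝ) ^ (-(1 - 1/γ)); congr 1; ring
        rw [he]; exact h2
      simpa using h3.const_mul C
    rw [tendsto_zero_iff_norm_tendsto_zero]
    exact squeeze_zero' (Eventually.of_forall fun n => norm_nonneg _)
      (eventually_atTop.mpr ⟨1, key⟩) hlim
end

section
/- Let γ ∈ (0,1). For every ε > 0 and every ζ ∈ [0,1], there exists a sequence of nonnegative functions q_n ∈ L^∞[0,1] such that (∫₀¹ q_n^γ dx)^{1/γ} < ε for all sufficiently large n, and ∫₀¹ q_n z dx → z(ζ) for every z ∈ W¹₂[0,1]. -/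
open MeasureTheory Real Filter Set

/-- For `γ ∈ (0,1)`, `ε > 0` and `ζ ∈ [0,1]` there is a sequence of nonnegative
bounded functions `q_n` with `‖q_n‖_γ < ε` eventually and `∫₀¹ q_n z dx → z ζ`
for every `z ∈ W¹₂[0,1]`. -/
theorem stmt10 (γ : ℝ) (hγ : γ ∈ Ioo (0:ℝ) 1) (ε : ℝ) (hε : 0 < ε)
    (ζ : ℝ) (hζ : ζ ∈ Icc (0:ℝ) 1) :
    ∃ q : ℕ → ℝ → ℝ,
      (∀ n x, 0 ≤ q n x) ∧
      (∀ n, ∃ C : ℝ, ∀ x, q n x ≤ C) ∧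
      (∃ N : ℕ, ∀ n ≥ N, (∫ x in (0:ℝ)..1, (q n x) ^ γ) ^ (1/γ) < ε) ∧
      (∀ z z' : ℝ → ℝ,
        (∀ x ∈ Icc (0:ℝ) 1, HasDerivAt z (z' x) x) →
        IntervalIntegrable (fun x => (z' x)^2) volume 0 1 →
        Tendsto (fun n : ℕ => ∫ x in (0:ℝ)..1, q n x * z x) atTop (nhds (z ζ))) := by
  obtain ⟨hγ0, hγ1⟩ := hγ
  set a : ℕ → ℝ := fun n => ζ - ζ / (n+1) with ha
  set b : ℕ → ℝ := fun n => ζ - ζ / (n+1) + 1 / (n+1) with hb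
  clear_value a b
  have key : ∀ n : ℕ, 0 ≤ a n ∧ a n ≤ ζ ∧ ζ ≤ b n ∧ b n ≤ 1 ∧ b n - a n = 1/((n:ℝ)+1) := by
    intro n
    have hm : (0:ℝ) < (n:ℝ)+1 := by positivity
    have hm1 : (1:ℝ) ≤ (n:ℝ)+1 := by
      have := Nat.cast_nonneg (α := ℝ) n; linarith
    have h1 : ζ / ((n:ℝ)+1) ≤ ζ := div_le_self hζ.1 hm1
    have h2 : 0 ≤ ζ / ((n:ℝ)+1) := div_nonneg hζ.1 hm.le
    have h3 : ζ / ((n:ℝ)+1) ≤ 1 / ((n:ℝ)+1) := by gcongr; exact hζ.2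
    have h4 : (1-ζ) / ((n:ℝ)+1) ≤ 1-ζ := div_le_self (by linarith [hζ.2]) hm1
    have h5 : b n = ζ + (1-ζ)/((n:ℝ)+1) := by simp only [hb]; ring
    refine ⟨by simp only [ha]; linarith, by simp only [ha]; linarith,
      by simp only [hb]; linarith, by rw [h5]; linarith, by simp only [ha, hb]; ring⟩
  have hsub : ∀ n : ℕ, Ioc (a n) (b n) ⊆ Ioc (0:ℝ) 1 :=
    fun n => Ioc_subset_Ioc (key n).1 (key n).2.2.2.1
  have hab : ∀ n : ℕ, a n ≤ b n := fun n => by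
    have := (key n).2.1; have := (key n).2.2.1; linarith
  refine ⟨fun n x => ((n:ℝ)+1) * Set.indicator (Set.Ioc (a n) (b n)) 1 x, ?_, ?_, ?_, ?_⟩
  · intro n x
    have : (0:ℝ) ≤ Set.indicator (Set.Ioc (a n) (b n)) 1 x :=
      Set.indicator_nonneg (fun _ _ => zero_le_one) x
    positivity
  · intro n
    refine ⟨(n:ℝ)+1, fun x => ?_⟩
    have h1 : Set.indicator (Set.Ioc (a n) (b n)) (1 : ℝ → ℝ) x ≤ 1 :=
      Set.indicator_le_self' (fun _ _ => zero_le_one) x |>.trans_eq rfl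
    have h2 : ((n:ℝ)+1) * Set.indicator (Set.Ioc (a n) (b n)) (1 : ℝ → ℝ) x ≤ ((n:ℝ)+1) * 1 :=
      mul_le_mul_of_nonneg_left h1 (by positivity)
    simpa using h2
  · -- the Lᵞ bound
    have hpow : ∀ (n : ℕ) (x : ℝ),
        (((n:ℝ)+1) * Set.indicator (Set.Ioc (a n) (b n)) 1 x) ^ γ
          = Set.indicator (Set.Ioc (a n) (b n)) (fun _ => ((n:ℝ)+1) ^ γ) x := by
      intro n x
      by_cases hx : x ∈ Set.Ioc (a n) (b n)
      · simp [Set.indicator_of_mem hx]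
      · simp [Set.indicator_of_notMem hx, Real.zero_rpow hγ0.ne']
    have hint : ∀ n : ℕ,
        (∫ x in (0:ℝ)..1, (((n:ℝ)+1) * Set.indicator (Set.Ioc (a n) (b n)) 1 x) ^ γ)
          = ((n:ℝ)+1) ^ (γ - 1) := by
      intro n
      have hm : (0:ℝ) < (n:ℝ)+1 := by positivity
      rw [intervalIntegral.integral_of_le zero_le_one]
      calc ∫ x in Set.Ioc (0:ℝ) 1,
              (((n:ℝ)+1) * Set.indicator (Set.Ioc (a n) (b n)) 1 x) ^ γ
          = ∫ x in Set.Ioc (0:ℝ) 1,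
              Set.indicator (Set.Ioc (a n) (b n)) (fun _ => ((n:ℝ)+1) ^ γ) x := by
            refine setIntegral_congr_fun measurableSet_Ioc (fun x _ => hpow n x)
        _ = ∫ x in Set.Ioc (0:ℝ) 1 ∩ Set.Ioc (a n) (b n), ((n:ℝ)+1) ^ γ := by
            rw [setIntegral_indicator measurableSet_Ioc]
        _ = ∫ x in Set.Ioc (a n) (b n), ((n:ℝ)+1) ^ γ := by
            rw [Set.inter_eq_self_of_subset_right (hsub n)]
        _ = ((n:ℝ)+1) ^ (γ - 1) := by
            rw [setIntegral_const, measureReal_def, Real.volume_Ioc, (key n).2.2.2.2,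
              ENNReal.toReal_ofReal (le_of_lt (by positivity : (0:ℝ) < 1/((n:ℝ)+1))),
              smul_eq_mul, Real.rpow_sub hm, Real.rpow_one]
            ring
    have hT : Tendsto (fun n : ℕ => (((n:ℝ)+1) ^ (γ - 1)) ^ (1/γ)) atTop (nhds 0) := by
      have h1 : Tendsto (fun x : ℝ => x ^ (-((1-γ)/γ))) atTop (nhds 0) :=
        tendsto_rpow_neg_atTop (div_pos (by linarith) hγ0)
      have h2 : Tendsto (fun n : ℕ => (n:ℝ)+1) atTop atTop :=
        tendsto_atTop_add_const_right _ 1 tendsto_natCast_atTop_atTop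
      have h3 := h1.comp h2
      refine h3.congr (fun n => ?_)
      have hm : (0:ℝ) ≤ (n:ℝ)+1 := by positivity
      simp only [Function.comp]
      rw [← Real.rpow_mul hm]
      congr 1
      field_simp
      ring
    obtain ⟨N, hN⟩ := (hT.eventually (gt_mem_nhds hε)).exists_forall_of_atTop
    exact ⟨N, fun n hn => by rw [hint n]; exact hN n hn⟩
  · -- convergence to z ζ
    intro z z' hz _
    have hcont : ContinuousOn z (Icc (0:ℝ) 1) :=
      fun x hx => (hz x hx).continuousAt.continuousWithinAt
    have hζcont : ContinuousAt z ζ := (hz ζ hζ).continuousAt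
    have hItg : ∀ n : ℕ, IntervalIntegrable z volume (a n) (b n) := by
      intro n
      refine (hcont.mono ?_).intervalIntegrable_of_Icc (hab n)
      exact Icc_subset_Icc (key n).1 (key n).2.2.2.1
    have hI : ∀ n : ℕ,
        (∫ x in (0:ℝ)..1, (((n:ℝ)+1) * Set.indicator (Set.Ioc (a n) (b n)) 1 x) * z x)
          = ((n:ℝ)+1) * ∫ x in (a n)..(b n), z x := by
      intro n
      have hmul : ∀ x : ℝ,
          (((n:ℝ)+1) * Set.indicator (Set.Ioc (a n) (b n)) 1 x) * z x
            = ((n:ℝ)+1) * Set.indicator (Set.Ioc (a n) (b n)) z x := by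
        intro x
        by_cases hx : x ∈ Set.Ioc (a n) (b n)
        · simp [Set.indicator_of_mem hx]
        · simp [Set.indicator_of_notMem hx]
      calc (∫ x in (0:ℝ)..1, (((n:ℝ)+1) * Set.indicator (Set.Ioc (a n) (b n)) 1 x) * z x)
          = ∫ x in (0:ℝ)..1, ((n:ℝ)+1) * Set.indicator (Set.Ioc (a n) (b n)) z x := by
            exact intervalIntegral.integral_congr (fun x _ => hmul x)
        _ = ((n:ℝ)+1) * ∫ x in (0:ℝ)..1, Set.indicator (Set.Ioc (a n) (b n)) z x := by
            rw [intervalIntegral.integral_const_mul]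
        _ = ((n:ℝ)+1) * ∫ x in (a n)..(b n), z x := by
            congr 1
            rw [intervalIntegral.integral_of_le zero_le_one,
              setIntegral_indicator measurableSet_Ioc,
              Set.inter_eq_self_of_subset_right (hsub n),
              intervalIntegral.integral_of_le (hab n)]
    rw [Metric.tendsto_atTop]
    intro δ hδ
    obtain ⟨η, hη0, hη⟩ := Metric.continuousAt_iff.mp hζcont (δ/2) (by linarith)
    obtain ⟨N, hN⟩ := exists_nat_one_div_lt hη0
    refine ⟨N, fun n hn => ?_⟩
    have hm : (0:ℝ) < (n:ℝ)+1 := by positivity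
    have hlen := (key n).2.2.2.2
    have hstep : 1/((n:ℝ)+1) ≤ 1/((N:ℝ)+1) := by
      have hc : (N:ℝ) ≤ (n:ℝ) := Nat.cast_le.mpr hn
      gcongr
    have hlt : 1/((n:ℝ)+1) < η := lt_of_le_of_lt hstep hN
    have hbound : ∀ x ∈ Set.uIoc (a n) (b n), ‖z x - z ζ‖ ≤ δ/2 := by
      intro x hx
      rw [Set.uIoc_of_le (hab n)] at hx
      obtain ⟨hx1, hx2⟩ := hx
      have hk1 : a n ≤ ζ := (key n).2.1
      have hk2 : ζ ≤ b n := (key n).2.2.1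
      have hd1 : 0 ≤ ζ/((n:ℝ)+1) := div_nonneg hζ.1 hm.le
      have hd2 : ζ/((n:ℝ)+1) ≤ 1/((n:ℝ)+1) := by gcongr; exact hζ.2
      have h1 : |x - ζ| < η := by
        rw [abs_sub_lt_iff]
        constructor <;> linarith
      have := hη (by rwa [Real.dist_eq])
      rw [Real.dist_eq] at this
      exact le_of_lt this
    have hsplit : (∫ x in (a n)..(b n), z x)
        = (∫ x in (a n)..(b n), (z x - z ζ)) + (b n - a n) * z ζ := by
      rw [intervalIntegral.integral_sub (hItg n) intervalIntegrable_const,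
        intervalIntegral.integral_const, smul_eq_mul]
      ring
    have hnorm : ‖∫ x in (a n)..(b n), (z x - z ζ)‖ ≤ δ/2 * |b n - a n| :=
      intervalIntegral.norm_integral_le_of_norm_le_const hbound
    rw [hI n, Real.dist_eq]
    have habs : |b n - a n| = 1/((n:ℝ)+1) := by rw [hlen]; exact abs_of_pos (by positivity)
    rw [hsplit]
    have hc : ((n:ℝ)+1) * ((b n - a n) * z ζ) = z ζ := by
      rw [hlen]; field_simp
    have hfin : |((n:ℝ)+1) * ∫ x in (a n)..(b n), (z x - z ζ)| ≤ δ/2 := by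
      rw [abs_mul, abs_of_pos hm]
      calc ((n:ℝ)+1) * |∫ x in (a n)..(b n), (z x - z ζ)|
          ≤ ((n:ℝ)+1) * (δ/2 * (1/((n:ℝ)+1))) := by
            have := hnorm; rw [habs] at this
            exact mul_le_mul_of_nonneg_left (by simpa using this) hm.le
        _ = δ/2 := by field_simp
    calc |((n:ℝ)+1) * ((∫ x in (a n)..(b n), (z x - z ζ)) + (b n - a n) * z ζ) - z ζ|
        = |((n:ℝ)+1) * ∫ x in (a n)..(b n), (z x - z ζ)| := by
          rw [mul_add, hc, add_sub_cancel_right]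
      _ ≤ δ/2 := hfin
      _ < δ := by linarith
end

section
/- Let γ ∈ (0,1) and let c > 0 be any constant. Then there exist sequences q_n : [0,1] → ℝ of nonnegative essentially bounded functions with ∫₀¹ q_n^γ dx = 1, and numbers κ_n ∈ (0,1), such that for every z ∈ W¹₂[0,1], ∫₀¹ κ_n q_n z dx → c·∫₀¹ z dx as n → ∞. -/
open MeasureTheory Real Filter Set
open scoped Interval

private lemma ae_ne_point (S : ℝ) : ∀ᵐ x : ℝ, x ≠ S := by
  have h : volume ({S} : Set ℝ) = 0 := Real.volume_singleton
  rw [ae_iff]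
  convert h using 2
  ext x; simp

private lemma blockInt {t : ℝ} (ht0 : 0 < t) (ht1 : t < 1) {N : ℕ} (hN : 0 < N)
    {k : ℕ} (hk : k < N) {f : ℝ → ℝ}
    (hf : IntervalIntegrable f volume ((k:ℝ)/N) (((k:ℝ)+1)/N)) :
    IntervalIntegrable (fun x => (if Int.fract ((N:ℝ)*x) < t then (1:ℝ) else 0) * f x)
      volume ((k:ℝ)/N) (((k:ℝ)+1)/N) ∧
    ∫ x in ((k:ℝ)/N)..(((k:ℝ)+1)/N),
        (if Int.fract ((N:ℝ)*x) < t then (1:ℝ) else 0) * f x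
      = ∫ x in ((k:ℝ)/N)..(((k:ℝ)+t)/N), f x := by
  have hNr : (0:ℝ) < (N:ℝ) := by exact_mod_cast hN
  set g : ℝ → ℝ := fun x => (if Int.fract ((N:ℝ)*x) < t then (1:ℝ) else 0) with hg
  set A : ℝ := (k:ℝ)/N with hA
  set S : ℝ := ((k:ℝ)+t)/N with hS
  set B : ℝ := ((k:ℝ)+1)/N with hB
  have hAS : A < S := (div_lt_div_iff_of_pos_right hNr).mpr (by linarith)
  have hSB : S < B := (div_lt_div_iff_of_pos_right hNr).mpr (by linarith)
  -- fract identification on the open block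
  have hfr : ∀ x : ℝ, A ≤ x → x < B → Int.fract ((N:ℝ)*x) = (N:ℝ)*x - k := by
    intro x h1 h2
    have e1 : (k:ℝ) ≤ (N:ℝ)*x := by
      rw [hA, div_le_iff₀ hNr] at h1; linarith
    have e2 : (N:ℝ)*x < (k:ℝ)+1 := by
      rw [hB, lt_div_iff₀ hNr] at h2; linarith
    have : Int.fract ((N:ℝ)*x - (k:ℤ)) = Int.fract ((N:ℝ)*x) := Int.fract_sub_intCast _ _
    rw [← this, Int.fract_eq_self.mpr ⟨by push_cast; linarith, by push_cast; linarith⟩]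
    push_cast; ring
  -- a.e. equalities on the two halves
  have hone : ∀ᵐ x : ℝ, x ∈ Ι A S → g x * f x = f x := by
    filter_upwards [ae_ne_point S] with x hx hmem
    rw [uIoc_of_le hAS.le] at hmem
    have hxS : x < S := lt_of_le_of_ne hmem.2 hx
    have hfx := hfr x hmem.1.le (hxS.trans hSB)
    have : Int.fract ((N:ℝ)*x) < t := by
      rw [hfx]
      rw [hS, lt_div_iff₀ hNr] at hxS; linarith
    simp [hg, this]
  have hzero : ∀ᵐ x : ℝ, x ∈ Ι S B → g x * f x = 0 := by
    filter_upwards [ae_ne_point B] with x hx hmem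
    rw [uIoc_of_le hSB.le] at hmem
    have hxB : x < B := lt_of_le_of_ne hmem.2 hx
    have hfx := hfr x (hAS.le.trans hmem.1.le) hxB
    have : ¬ Int.fract ((N:ℝ)*x) < t := by
      rw [hfx]
      have h1 := hmem.1
      rw [hS, div_lt_iff₀ hNr] at h1
      push_neg; linarith
    simp [hg, this]
  -- integrability on the two halves
  have hfsub1 : IntervalIntegrable f volume A S := by
    apply hf.mono_set
    rw [uIcc_of_le hAS.le, uIcc_of_le (hAS.trans hSB).le]
    exact Icc_subset_Icc le_rfl hSB.le
  have hint1 : IntervalIntegrable (fun x => g x * f x) volume A S := by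
    rw [intervalIntegrable_iff_integrableOn_Ioc_of_le hAS.le] at hfsub1 ⊢
    refine hfsub1.congr ?_
    have := (ae_restrict_of_ae (μ := volume) (s := Ioc A S) hone)
    filter_upwards [this, ae_restrict_mem measurableSet_Ioc] with x h1 h2
    exact (h1 (by rwa [uIoc_of_le hAS.le])).symm
  have hint2 : IntervalIntegrable (fun x => g x * f x) volume S B := by
    rw [intervalIntegrable_iff_integrableOn_Ioc_of_le hSB.le]
    refine (integrable_zero _ _ _).congr ?_
    have := (ae_restrict_of_ae (μ := volume) (s := Ioc S B) hzero)
    filter_upwards [this, ae_restrict_mem measurableSet_Ioc] with x h1 h2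
    exact (h1 (by rwa [uIoc_of_le hSB.le])).symm
  refine ⟨hint1.trans hint2, ?_⟩
  rw [← intervalIntegral.integral_add_adjacent_intervals hint1 hint2,
    intervalIntegral.integral_congr_ae hone, intervalIntegral.integral_zero_ae hzero,
    add_zero]


private lemma subIntegrable {f : ℝ → ℝ} (hf : IntervalIntegrable f volume 0 1)
    {N : ℕ} (hN : 0 < N) {k : ℕ} (hk : k < N) :
    IntervalIntegrable f volume ((k:ℝ)/N) (((k:ℝ)+1)/N) := by
  have hNr : (0:ℝ) < (N:ℝ) := by exact_mod_cast hN
  apply hf.mono_set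
  have h0 : (0:ℝ) ≤ (k:ℝ)/N := by positivity
  have h1 : ((k:ℝ)+1)/N ≤ 1 := by
    rw [div_le_one hNr]
    have : (k:ℝ)+1 ≤ (N:ℝ) := by exact_mod_cast hk
    linarith
  have h2 : (k:ℝ)/N ≤ ((k:ℝ)+1)/N :=
    le_of_lt ((div_lt_div_iff_of_pos_right hNr).mpr (by linarith))
  rw [uIcc_of_le h2, uIcc_of_le (zero_le_one : (0:ℝ) ≤ 1)]
  exact Icc_subset_Icc h0 h1

/-- Integral over `[0,1]` of the spike indicator times `f` equals the sum of the
spike integrals. -/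
private lemma fullInt {t : ℝ} (ht0 : 0 < t) (ht1 : t < 1) {N : ℕ} (hN : 0 < N)
    {f : ℝ → ℝ} (hf : IntervalIntegrable f volume 0 1) :
    ∫ x in (0:ℝ)..1, (if Int.fract ((N:ℝ)*x) < t then (1:ℝ) else 0) * f x
      = ∑ k ∈ Finset.range N, ∫ x in ((k:ℝ)/N)..(((k:ℝ)+t)/N), f x := by
  have hNr : (0:ℝ) < (N:ℝ) := by exact_mod_cast hN
  have hsub : ∀ k : ℕ, k < N → IntervalIntegrable f volume ((k:ℝ)/N) (((k:ℝ)+1)/N) :=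
    fun k hk => subIntegrable hf hN hk
  have key : ∀ k : ℕ, k < N →
      (IntervalIntegrable (fun x => (if Int.fract ((N:ℝ)*x) < t then (1:ℝ) else 0) * f x)
        volume ((k:ℝ)/N) (((k:ℝ)+1)/N) ∧
      ∫ x in ((k:ℝ)/N)..(((k:ℝ)+1)/N),
          (if Int.fract ((N:ℝ)*x) < t then (1:ℝ) else 0) * f x
        = ∫ x in ((k:ℝ)/N)..(((k:ℝ)+t)/N), f x) :=
    fun k hk => blockInt ht0 ht1 hN hk (hsub k hk)
  have hadj := intervalIntegral.sum_integral_adjacent_intervals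
    (μ := volume) (a := fun k : ℕ => (k:ℝ)/N) (n := N)
    (f := fun x => (if Int.fract ((N:ℝ)*x) < t then (1:ℝ) else 0) * f x) ?_
  · rw [show ((0:ℕ):ℝ)/N = (0:ℝ) by simp, show ((N:ℕ):ℝ)/N = (1:ℝ) by field_simp] at hadj
    rw [← hadj]
    apply Finset.sum_congr rfl
    intro k hk
    have hk' := Finset.mem_range.mp hk
    convert (key k hk').2 using 2
    push_cast; ring
  · intro k hk
    convert (key k hk).1 using 2
    push_cast; ring

/-- For `γ ∈ (0,1)` and a constant `c > 0` there are nonnegative bounded `q_n` with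
`∫₀¹ q_n^γ = 1` and `κ_n ∈ (0,1)` such that `∫₀¹ κ_n q_n z dx → c·∫₀¹ z dx`
for every `z ∈ W¹₂[0,1]`. -/
theorem stmt11 (γ : ℝ) (hγ : γ ∈ Ioo (0:ℝ) 1) (c : ℝ) (hc : 0 < c) :
    ∃ q : ℕ → ℝ → ℝ, ∃ κ : ℕ → ℝ,
      (∀ n x, 0 ≤ q n x) ∧
      (∀ n, ∃ C : ℝ, ∀ x, q n x ≤ C) ∧
      (∀ n : ℕ, ∫ x in (0:ℝ)..1, (q n x) ^ γ = 1) ∧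
      (∀ n, κ n ∈ Ioo (0:ℝ) 1) ∧
      (∀ z z' : ℝ → ℝ,
        (∀ x ∈ Icc (0:ℝ) 1, HasDerivAt z (z' x) x) →
        IntervalIntegrable (fun x => (z' x)^2) volume 0 1 →
        Tendsto (fun n : ℕ => ∫ x in (0:ℝ)..1, κ n * q n x * z x) atTop
          (nhds (c * ∫ x in (0:ℝ)..1, z x))) := by
  obtain ⟨hγ0, hγ1⟩ := hγ
  have hγ1' : 0 < 1 - γ := by linarith
  obtain ⟨t, a, κ0, ht0, ht1, ha0, haγ, hκmem, hκa⟩ :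
      ∃ t a κ0 : ℝ, 0 < t ∧ t < 1 ∧ 0 < a ∧ a ^ γ = t⁻¹ ∧ κ0 ∈ Ioo (0:ℝ) 1 ∧
        κ0 * a = c / t := by
    set m : ℝ := min (1/2) (1/(2*c)) with hm
    have hm0 : 0 < m := lt_min (by norm_num) (by positivity)
    have hm2 : m ≤ 1/(2*c) := min_le_right _ _
    have hm1 : m < 1 := lt_of_le_of_lt (min_le_left _ _) (by norm_num)
    set t : ℝ := m ^ (γ/(1-γ)) with htdef
    have hexp : 0 < γ/(1-γ) := by positivity
    have ht0 : 0 < t := Real.rpow_pos_of_pos hm0 _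
    have ht1 : t < 1 := Real.rpow_lt_one hm0.le hm1 hexp
    have htδ : t ^ ((1-γ)/γ) = m := by
      rw [htdef, ← Real.rpow_mul hm0.le,
        show γ/(1-γ)*((1-γ)/γ) = 1 by field_simp, Real.rpow_one]
    refine ⟨t, t ^ (-(1/γ)), c * m, ht0, ht1, Real.rpow_pos_of_pos ht0 _, ?_,
      ⟨by positivity, ?_⟩, ?_⟩
    · rw [← Real.rpow_mul ht0.le, show -(1/γ)*γ = -1 by field_simp, Real.rpow_neg_one]
    · calc c * m ≤ c * (1/(2*c)) := mul_le_mul_of_nonneg_left hm2 hc.le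
        _ = 1/2 := by field_simp
        _ < 1 := by norm_num
    · rw [← htδ, mul_assoc, ← Real.rpow_add ht0,
        show (1-γ)/γ + -(1/γ) = -1 by field_simp; ring, Real.rpow_neg_one,
        div_eq_mul_inv]
  refine ⟨fun n x => a * (if Int.fract (((n+1:ℕ):ℝ) * x) < t then (1:ℝ) else 0),
    fun _ => κ0, ?_, ?_, ?_, fun _ => hκmem, ?_⟩
  · intro n x
    show (0:ℝ) ≤ a * if Int.fract (((n+1:ℕ):ℝ) * x) < t then (1:ℝ) else 0
    split <;> simp [ha0.le]
  · intro n
    refine ⟨a, fun x => ?_⟩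
    show (a * if Int.fract (((n+1:ℕ):ℝ) * x) < t then (1:ℝ) else 0) ≤ a
    split <;> simp [ha0.le]
  · intro n
    have hpt : ∀ x : ℝ, (a * (if Int.fract (((n+1:ℕ):ℝ) * x) < t then (1:ℝ) else 0)) ^ γ
        = a ^ γ * ((if Int.fract (((n+1:ℕ):ℝ) * x) < t then (1:ℝ) else 0) * 1) := by
      intro x; split
      · simp
      · simp [Real.zero_rpow hγ0.ne']
    rw [intervalIntegral.integral_congr (fun x _ => hpt x),
      intervalIntegral.integral_const_mul,
      fullInt ht0 ht1 n.succ_pos intervalIntegrable_const]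
    simp only [intervalIntegral.integral_const, smul_eq_mul, mul_one]
    have hNr : (0:ℝ) < ((n+1:ℕ):ℝ) := by positivity
    have : ∀ k ∈ Finset.range (n+1),
        (((k:ℝ)+t)/((n+1:ℕ):ℝ) - (k:ℝ)/((n+1:ℕ):ℝ)) = t/((n+1:ℕ):ℝ) :=
      fun k _ => by ring
    rw [Finset.sum_congr rfl this, Finset.sum_const, Finset.card_range, nsmul_eq_mul,
      haγ]
    field_simp
  · intro z z' hz _
    have hzc : ContinuousOn z (Icc 0 1) :=
      fun x hx => ((hz x hx).continuousAt).continuousWithinAt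
    have hzint : IntervalIntegrable z volume 0 1 := by
      apply ContinuousOn.intervalIntegrable
      rwa [uIcc_of_le (zero_le_one : (0:ℝ) ≤ 1)]
    rw [Metric.tendsto_atTop]
    intro ε hε
    have hden : (0:ℝ) < 2*(2*c+1) := by positivity
    set ε' : ℝ := ε / (2*(2*c+1)) with hε'def
    have hε' : 0 < ε' := by positivity
    obtain ⟨δ', hδ'0, hδ'⟩ := Metric.uniformContinuousOn_iff.mp
      (isCompact_Icc.uniformContinuousOn_of_continuous hzc) ε' hε'
    obtain ⟨n₀, hn₀⟩ := exists_nat_one_div_lt hδ'0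
    refine ⟨n₀, fun n hn => ?_⟩
    have hNr : (0:ℝ) < ((n+1:ℕ):ℝ) := by positivity
    have hNδ : 1/((n+1:ℕ):ℝ) < δ' := by
      refine lt_of_le_of_lt ?_ hn₀
      apply one_div_le_one_div_of_le (by positivity)
      push_cast
      exact_mod_cast Nat.add_le_add_right hn 1
    simp only
    have hrw : ∀ x, κ0 * (a * (if Int.fract (((n+1:ℕ):ℝ)*x) < t then (1:ℝ) else 0)) * z x
        = (κ0*a) * ((if Int.fract (((n+1:ℕ):ℝ)*x) < t then (1:ℝ) else 0) * z x) :=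
      fun x => by ring
    rw [intervalIntegral.integral_congr (fun x _ => hrw x),
      intervalIntegral.integral_const_mul, hκa,
      fullInt ht0 ht1 n.succ_pos hzint]
    have hcast : ∀ k : ℕ, ((k+1:ℕ):ℝ)/((n+1:ℕ):ℝ) = ((k:ℝ)+1)/((n+1:ℕ):ℝ) :=
      fun k => by push_cast; ring
    have hsumz : (∑ k ∈ Finset.range (n+1),
        ∫ x in ((k:ℝ)/((n+1:ℕ):ℝ))..(((k:ℝ)+1)/((n+1:ℕ):ℝ)), z x)
        = ∫ x in (0:ℝ)..1, z x := by
      have hadj := intervalIntegral.sum_integral_adjacent_intervals (μ := volume)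
        (a := fun k : ℕ => (k:ℝ)/((n+1:ℕ):ℝ)) (n := n+1) (f := z) ?_
      · rw [show ((0:ℕ):ℝ)/((n+1:ℕ):ℝ) = (0:ℝ) by simp,
          show ((n+1:ℕ):ℝ)/((n+1:ℕ):ℝ) = (1:ℝ) by field_simp] at hadj
        rw [← hadj]
        refine Finset.sum_congr rfl fun k hk => ?_
        rw [hcast k]
      · intro k hk
        convert subIntegrable hzint n.succ_pos hk using 2 <;> (push_cast; ring)
    rw [Real.dist_eq, ← hsumz, Finset.mul_sum, Finset.mul_sum, ← Finset.sum_sub_distrib]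
    have key : ∀ k ∈ Finset.range (n+1),
        |c/t * (∫ x in ((k:ℝ)/((n+1:ℕ):ℝ))..(((k:ℝ)+t)/((n+1:ℕ):ℝ)), z x)
          - c * ∫ x in ((k:ℝ)/((n+1:ℕ):ℝ))..(((k:ℝ)+1)/((n+1:ℕ):ℝ)), z x|
          ≤ 2*c*ε'/((n+1:ℕ):ℝ) := by
      intro k hkmem
      have hk := Finset.mem_range.mp hkmem
      have hk1 : ((k:ℝ)+1) ≤ ((n+1:ℕ):ℝ) := by exact_mod_cast hk
      set A : ℝ := (k:ℝ)/((n+1:ℕ):ℝ) with hAdef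
      set S : ℝ := ((k:ℝ)+t)/((n+1:ℕ):ℝ) with hSdef
      set B : ℝ := ((k:ℝ)+1)/((n+1:ℕ):ℝ) with hBdef
      have hA0 : 0 ≤ A := by positivity
      have hB1 : B ≤ 1 := by rw [hBdef, div_le_one hNr]; linarith
      have hAS : A ≤ S := le_of_lt ((div_lt_div_iff_of_pos_right hNr).mpr (by linarith))
      have hSB : S ≤ B := le_of_lt ((div_lt_div_iff_of_pos_right hNr).mpr (by linarith))
      have hlenS : S - A = t/((n+1:ℕ):ℝ) := by rw [hSdef, hAdef]; ring
      have hlenB : B - A = 1/((n+1:ℕ):ℝ) := by rw [hBdef, hAdef]; ring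
      have hsubB : IntervalIntegrable z volume A B := by
        rw [hAdef, hBdef]
        convert subIntegrable hzint n.succ_pos hk using 2 <;> (push_cast; ring)
      have hsubS : IntervalIntegrable z volume A S := by
        apply hsubB.mono_set
        rw [uIcc_of_le hAS, uIcc_of_le (hAS.trans hSB)]
        exact Icc_subset_Icc le_rfl hSB
      have hAmem : A ∈ Icc (0:ℝ) 1 := ⟨hA0, (hAS.trans hSB).trans hB1⟩
      have hbnd : ∀ (u : ℝ), A ≤ u → u ≤ B → ∀ x ∈ Ι A u, ‖z x - z A‖ ≤ ε' := by
        intro u hAu huB x hx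
        rw [uIoc_of_le hAu] at hx
        have hxmem : x ∈ Icc (0:ℝ) 1 := ⟨hA0.trans hx.1.le, (hx.2.trans huB).trans hB1⟩
        have hdist : dist x A < δ' := by
          rw [Real.dist_eq, abs_of_pos (by linarith [hx.1])]
          have : x - A ≤ 1/((n+1:ℕ):ℝ) := by
            have := hx.2.trans huB
            linarith [hlenB]
          linarith
        have := hδ' x hxmem A hAmem hdist
        rw [Real.dist_eq] at this
        rw [Real.norm_eq_abs]
        exact this.le
      have hbS : |∫ x in A..S, (z x - z A)| ≤ ε' * (t/((n+1:ℕ):ℝ)) := by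
        have h := intervalIntegral.norm_integral_le_of_norm_le_const
          (C := ε') (f := fun x => z x - z A) (a := A) (b := S) (hbnd S hAS hSB)
        rw [Real.norm_eq_abs, abs_of_nonneg (by linarith [hlenS] : (0:ℝ) ≤ S - A),
          hlenS] at h
        exact h
      have hbB : |∫ x in A..B, (z x - z A)| ≤ ε' * (1/((n+1:ℕ):ℝ)) := by
        have h := intervalIntegral.norm_integral_le_of_norm_le_const
          (C := ε') (f := fun x => z x - z A) (a := A) (b := B) (hbnd B (hAS.trans hSB) le_rfl)
        rw [Real.norm_eq_abs, abs_of_nonneg (by linarith [hlenB] : (0:ℝ) ≤ B - A),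
          hlenB] at h
        exact h
      have eqS : (∫ x in A..S, z x)
          = (∫ x in A..S, (z x - z A)) + t/((n+1:ℕ):ℝ) * z A := by
        rw [intervalIntegral.integral_sub hsubS intervalIntegrable_const,
          intervalIntegral.integral_const, smul_eq_mul, hlenS]
        ring
      have eqB : (∫ x in A..B, z x)
          = (∫ x in A..B, (z x - z A)) + 1/((n+1:ℕ):ℝ) * z A := by
        rw [intervalIntegral.integral_sub hsubB intervalIntegrable_const,
          intervalIntegral.integral_const, smul_eq_mul, hlenB]
        ring
      have hfinal : c/t * (∫ x in A..S, z x) - c * (∫ x in A..B, z x)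
          = c/t * (∫ x in A..S, (z x - z A)) - c * (∫ x in A..B, (z x - z A)) := by
        rw [eqS, eqB]
        field_simp
        ring
      rw [hfinal]
      have hct : (0:ℝ) ≤ c/t := by positivity
      have h1 : |c/t * (∫ x in A..S, (z x - z A))| ≤ c/t * (ε' * (t/((n+1:ℕ):ℝ))) := by
        rw [abs_mul, abs_of_nonneg hct]
        exact mul_le_mul_of_nonneg_left hbS hct
      have h2 : |c * (∫ x in A..B, (z x - z A))| ≤ c * (ε' * (1/((n+1:ℕ):ℝ))) := by
        rw [abs_mul, abs_of_nonneg hc.le]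
        exact mul_le_mul_of_nonneg_left hbB hc.le
      calc |c/t * (∫ x in A..S, (z x - z A)) - c * (∫ x in A..B, (z x - z A))|
          ≤ |c/t * (∫ x in A..S, (z x - z A))| + |c * (∫ x in A..B, (z x - z A))| :=
            abs_sub _ _
        _ ≤ c/t * (ε' * (t/((n+1:ℕ):ℝ))) + c * (ε' * (1/((n+1:ℕ):ℝ))) := add_le_add h1 h2
        _ = 2*c*ε'/((n+1:ℕ):ℝ) := by field_simp; ring
    calc |∑ k ∈ Finset.range (n+1),
          (c/t * (∫ x in ((k:ℝ)/((n+1:ℕ):ℝ))..(((k:ℝ)+t)/((n+1:ℕ):ℝ)), z x)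
            - c * (∫ x in ((k:ℝ)/((n+1:ℕ):ℝ))..(((k:ℝ)+1)/((n+1:ℕ):ℝ)), z x))|
        ≤ ∑ k ∈ Finset.range (n+1),
          |c/t * (∫ x in ((k:ℝ)/((n+1:ℕ):ℝ))..(((k:ℝ)+t)/((n+1:ℕ):ℝ)), z x)
            - c * (∫ x in ((k:ℝ)/((n+1:ℕ):ℝ))..(((k:ℝ)+1)/((n+1:ℕ):ℝ)), z x)| :=
          Finset.abs_sum_le_sum_abs _ _
      _ ≤ ∑ _k ∈ Finset.range (n+1), 2*c*ε'/((n+1:ℕ):ℝ) := Finset.sum_le_sum key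
      _ = ((n+1:ℕ):ℝ) * (2*c*ε'/((n+1:ℕ):ℝ)) := by
          rw [Finset.sum_const, Finset.card_range, nsmul_eq_mul]
      _ = 2*c*ε' := by field_simp
      _ < ε := by
          rw [hε'def, ← mul_div_assoc, div_lt_iff₀ hden]
          nlinarith [mul_pos hc hε]
end

section
/- Let γ < 1, γ ≠ 0, and define m_γ = inf{ λ₁(q) : q ∈ Γ_γ }, where Γ_γ is the W₂⁻¹[0,1]-closure of A_γ = { q ∈ L¹[0,1] : q ≥ 0, ∫₀¹ q^γ dx = 1 }, and λ₁ is the first eigenvalue of y'' + qy + λy = 0 with y'(0) − k₀²y(0) = y'(1) + k₁²y(1) = 0 (extended continuously to Γ_γ). Then m_γ = −∞. -/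
open MeasureTheory Real Filter Set

/-- The set of Rayleigh-quotient values `R[q,y]` over admissible nonzero `y ∈ W¹₂[0,1]`,
whose infimum is the first eigenvalue `λ₁(q)` of `y'' + q y + λ y = 0` with
`y'(0) − k₀² y(0) = y'(1) + k₁² y(1) = 0`. -/
def rayleighSet (k0 k1 : ℝ) (q : ℝ → ℝ) : Set ℝ :=
  { t : ℝ | ∃ y yd : ℝ → ℝ,
      (∀ x ∈ Set.Icc (0:ℝ) 1, HasDerivAt y (yd x) x) ∧
      IntervalIntegrable (fun x => (yd x)^2) MeasureTheory.volume 0 1 ∧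
      IntervalIntegrable (fun x => q x * (y x)^2) MeasureTheory.volume 0 1 ∧
      (∫ x in (0:ℝ)..1, (y x)^2) ≠ 0 ∧
      t = ((∫ x in (0:ℝ)..1, (yd x)^2) + k0^2 * (y 0)^2 + k1^2 * (y 1)^2
            - ∫ x in (0:ℝ)..1, q x * (y x)^2) / (∫ x in (0:ℝ)..1, (y x)^2) }

/-- A step function (value `a` on `(-∞, s]`, value `b` elsewhere) is interval
integrable on `[0,1]`. -/
lemma piecewise_ii (s a b : ℝ) :
    IntervalIntegrable (fun x => if x ≤ s then a else b) volume 0 1 := by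
  have hm : Measurable (fun x : ℝ => if x ≤ s then a else b) :=
    Measurable.ite measurableSet_Iic measurable_const measurable_const
  have hint : IntegrableOn (fun x : ℝ => if x ≤ s then a else b) (Icc 0 1) := by
    apply Integrable.mono' (g := fun _ => |a| + |b|)
    · exact integrableOn_const measure_Icc_lt_top.ne enorm_ne_top
    · exact hm.aestronglyMeasurable
    · refine ae_of_all _ fun x => ?_
      by_cases h : x ≤ s <;> simp [h, Real.norm_eq_abs] <;> positivity
  have : uIcc (0:ℝ) 1 = Icc 0 1 := uIcc_of_le (by norm_num)
  exact IntegrableOn.intervalIntegrable (this ▸ hint)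

/-- Integral of a two-valued step function over `[0,1]`. -/
lemma piecewise_int (s a b : ℝ) (h0 : 0 ≤ s) (h1 : s ≤ 1) :
    (∫ x in (0:ℝ)..1, (if x ≤ s then a else b)) = s * a + (1 - s) * b := by
  have hii := piecewise_ii s a b
  have h1' : IntervalIntegrable (fun x => if x ≤ s then a else b) volume 0 s := by
    apply IntervalIntegrable.mono_set hii
    rw [uIcc_of_le h0, uIcc_of_le (by norm_num)]
    exact Icc_subset_Icc le_rfl h1
  have h2' : IntervalIntegrable (fun x => if x ≤ s then a else b) volume s 1 := by
    apply IntervalIntegrable.mono_set hii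
    rw [uIcc_of_le h1, uIcc_of_le (by norm_num)]
    exact Icc_subset_Icc h0 le_rfl
  rw [← intervalIntegral.integral_add_adjacent_intervals h1' h2']
  have e1 : (∫ x in (0:ℝ)..s, (if x ≤ s then a else b)) = ∫ _x in (0:ℝ)..s, a := by
    apply intervalIntegral.integral_congr
    intro x hx
    rw [uIcc_of_le h0] at hx
    simp [hx.2]
  have e2 : (∫ x in s..(1:ℝ), (if x ≤ s then a else b)) = ∫ _x in s..(1:ℝ), b := by
    apply intervalIntegral.integral_congr_ae
    refine ae_of_all _ fun x hx => ?_
    rw [Set.uIoc_of_le h1] at hx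
    simp [not_le.2 hx.1]
  rw [e1, e2]
  simp only [intervalIntegral.integral_const, smul_eq_mul]
  ring

/-- The Rayleigh value of the constant test function `y ≡ 1` belongs to the Rayleigh set. -/
lemma mem_ray (k0 k1 : ℝ) (q : ℝ → ℝ) (hq : IntervalIntegrable q volume 0 1) :
    (k0^2 + k1^2 - ∫ x in (0:ℝ)..1, q x) ∈ rayleighSet k0 k1 q := by
  refine ⟨fun _ => 1, fun _ => 0, fun x _ => hasDerivAt_const x 1, ?_, ?_, ?_, ?_⟩
  · simpa using intervalIntegrable_const (c := (0:ℝ)) (μ := volume) (a := (0:ℝ)) (b := 1)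
  · simpa using hq
  · norm_num
  · norm_num

/-- If `0 ≤ q ≤ C` on `[0,1]`, the Rayleigh set is bounded below by `-C`. -/
lemma ray_bdd (k0 k1 C : ℝ) (q : ℝ → ℝ) (hC : 0 ≤ C)
    (hqC : ∀ x ∈ Icc (0:ℝ) 1, q x ≤ C) :
    ∀ t ∈ rayleighSet k0 k1 q, -C ≤ t := by
  rintro t ⟨y, yd, hder, hyd2, hqy2, hD, rfl⟩
  have hycont : ContinuousOn y (Icc 0 1) := fun x hx =>
    ((hder x hx).continuousAt).continuousWithinAt
  have hy2 : IntervalIntegrable (fun x => (y x)^2) volume 0 1 := by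
    have h : ContinuousOn (fun x => (y x)^2) (uIcc (0:ℝ) 1) := by
      rw [uIcc_of_le (by norm_num : (0:ℝ) ≤ 1)]
      exact hycont.pow 2
    exact h.intervalIntegrable
  set D := ∫ x in (0:ℝ)..1, (y x)^2 with hDdef
  have hD0 : 0 ≤ D := intervalIntegral.integral_nonneg (by norm_num)
    (fun x _ => sq_nonneg _)
  have hDpos : 0 < D := lt_of_le_of_ne hD0 (Ne.symm hD)
  have hnum1 : 0 ≤ ∫ x in (0:ℝ)..1, (yd x)^2 := intervalIntegral.integral_nonneg
    (by norm_num) (fun x _ => sq_nonneg _)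
  have hI : (∫ x in (0:ℝ)..1, q x * (y x)^2) ≤ C * D := by
    have h1 : (∫ x in (0:ℝ)..1, q x * (y x)^2) ≤ ∫ x in (0:ℝ)..1, C * (y x)^2 := by
      apply intervalIntegral.integral_mono_on (by norm_num) hqy2 (hy2.const_mul C)
      intro x hx
      exact mul_le_mul_of_nonneg_right (hqC x hx) (sq_nonneg _)
    rw [intervalIntegral.integral_const_mul] at h1
    exact h1
  rw [le_div_iff₀ hDpos]
  have h0 : 0 ≤ k0^2 * (y 0)^2 := by positivity
  have h1' : 0 ≤ k1^2 * (y 1)^2 := by positivity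
  nlinarith

/-- Key reduction: a bounded nonnegative potential with large integral makes
`sInf` of the Rayleigh set small. -/
lemma key (k0 k1 M : ℝ) (q : ℝ → ℝ)
    (hqi : IntervalIntegrable q volume 0 1)
    (hbig : (∫ x in (0:ℝ)..1, q x) > k0^2 + k1^2 - M)
    (C : ℝ) (hC : 0 ≤ C) (hqC : ∀ x ∈ Icc (0:ℝ) 1, q x ≤ C) :
    sInf (rayleighSet k0 k1 q) < M := by
  have hmem := mem_ray k0 k1 q hqi
  have hbdd : BddBelow (rayleighSet k0 k1 q) :=
    ⟨-C, fun t ht => ray_bdd k0 k1 C q hC hqC t ht⟩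
  calc sInf (rayleighSet k0 k1 q) ≤ k0^2 + k1^2 - ∫ x in (0:ℝ)..1, q x :=
        csInf_le hbdd hmem
    _ < M := by linarith

/-- Construction for `γ < 0`. -/
lemma construct_neg (k0 k1 γ M : ℝ) (hγ0 : γ ≠ 0) (hγneg : γ < 0) :
    ∃ q : ℝ → ℝ, (∀ x, 0 ≤ q x) ∧ IntervalIntegrable q volume 0 1 ∧
      (∫ x in (0:ℝ)..1, (q x) ^ γ) = 1 ∧
      (∫ x in (0:ℝ)..1, q x) > k0^2 + k1^2 - M ∧
      (∃ C : ℝ, 0 ≤ C ∧ ∀ x ∈ Icc (0:ℝ) 1, q x ≤ C) := by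
  set K : ℝ := max (2*(k0^2 + k1^2 - M) + 2) 1 with hKdef
  have hK1 : (1:ℝ) ≤ K := le_max_right _ _
  have hKpos : (0:ℝ) < K := by linarith
  have hKγ_le : K ^ γ ≤ 1 := Real.rpow_le_one_of_one_le_of_nonpos hK1 hγneg.le
  have hKγ_pos : 0 < K ^ γ := Real.rpow_pos_of_pos hKpos γ
  set a : ℝ := (2 - K ^ γ) ^ (1/γ) with hadef
  have hbase : (0:ℝ) ≤ 2 - K ^ γ := by linarith
  have ha0 : 0 ≤ a := Real.rpow_nonneg hbase _
  have haγ : a ^ γ = 2 - K ^ γ := by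
    rw [hadef, ← Real.rpow_mul hbase, one_div, inv_mul_cancel₀ hγ0, Real.rpow_one]
  refine ⟨fun x => if x ≤ (1/2:ℝ) then a else K, ?_, ?_, ?_, ?_, ?_⟩
  · intro x; dsimp only; split <;> [exact ha0; linarith]
  · exact piecewise_ii _ _ _
  · have : (fun x : ℝ => (if x ≤ (1/2:ℝ) then a else K) ^ γ)
        = fun x : ℝ => if x ≤ (1/2:ℝ) then a ^ γ else K ^ γ := by
      funext x; split <;> rfl
    calc (∫ x in (0:ℝ)..1, (if x ≤ (1/2:ℝ) then a else K) ^ γ)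
        = ∫ x in (0:ℝ)..1, (if x ≤ (1/2:ℝ) then a ^ γ else K ^ γ) := by rw [this]
      _ = (1/2) * (a ^ γ) + (1 - 1/2) * (K ^ γ) :=
          piecewise_int _ _ _ (by norm_num) (by norm_num)
      _ = 1 := by rw [haγ]; ring
  · have := piecewise_int (1/2) a K (by norm_num) (by norm_num)
    rw [this]
    have hKbig : 2*(k0^2 + k1^2 - M) + 2 ≤ K := le_max_left _ _
    nlinarith
  · exact ⟨a + K, by linarith, fun x _ => by dsimp only; split <;> linarith⟩

/-- Construction for `0 < γ < 1`. -/
lemma construct_pos (k0 k1 γ M : ℝ) (hγ : γ < 1) (hγpos : 0 < γ) :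
    ∃ q : ℝ → ℝ, (∀ x, 0 ≤ q x) ∧ IntervalIntegrable q volume 0 1 ∧
      (∫ x in (0:ℝ)..1, (q x) ^ γ) = 1 ∧
      (∫ x in (0:ℝ)..1, q x) > k0^2 + k1^2 - M ∧
      (∃ C : ℝ, 0 ≤ C ∧ ∀ x ∈ Icc (0:ℝ) 1, q x ≤ C) := by
  set K : ℝ := max (k0^2 + k1^2 - M + 1) 1 with hKdef
  have hK1 : (1:ℝ) ≤ K := le_max_right _ _
  have hKpos : (0:ℝ) < K := by linarith
  have hexp : γ / (γ - 1) ≤ 0 :=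
    div_nonpos_of_nonneg_of_nonpos hγpos.le (by linarith)
  set s : ℝ := K ^ (γ / (γ - 1)) with hsdef
  have hs_pos : 0 < s := Real.rpow_pos_of_pos hKpos _
  have hs_le1 : s ≤ 1 := Real.rpow_le_one_of_one_le_of_nonpos hK1 hexp
  set a : ℝ := s ^ (-1/γ) with hadef
  have ha0 : 0 ≤ a := Real.rpow_nonneg hs_pos.le _
  have haγ : a ^ γ = s⁻¹ := by
    rw [hadef, ← Real.rpow_mul hs_pos.le]
    rw [show (-1/γ) * γ = -1 by field_simp]
    exact Real.rpow_neg_one s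
  have hsa : s * a = K := by
    have h1 : s * a = s ^ (1 + (-1/γ)) := by
      rw [Real.rpow_add hs_pos, Real.rpow_one]
    have he : γ/(γ-1) ≠ 0 := div_ne_zero (ne_of_gt hγpos)
      (by intro h; apply absurd hγ; simp [sub_eq_zero] at h; simp [h])
    have h2 : 1 + (-1/γ) = (γ/(γ-1))⁻¹ := by
      rw [inv_div]
      field_simp
      ring
    rw [h1, h2, hsdef, ← Real.rpow_mul hKpos.le, mul_inv_cancel₀ he, Real.rpow_one]
  refine ⟨fun x => if x ≤ s then a else 0, ?_, ?_, ?_, ?_, ?_⟩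
  · intro x; dsimp only; split <;> [exact ha0; exact le_refl 0]
  · exact piecewise_ii _ _ _
  · have : (fun x : ℝ => (if x ≤ s then a else 0) ^ γ)
        = fun x : ℝ => if x ≤ s then a ^ γ else (0:ℝ) := by
      funext x; split
      · rfl
      · exact Real.zero_rpow (ne_of_gt hγpos)
    rw [this, piecewise_int _ _ _ hs_pos.le hs_le1, haγ]
    field_simp
    ring
  · rw [piecewise_int _ _ _ hs_pos.le hs_le1, mul_zero, add_zero, hsa]
    have : k0^2 + k1^2 - M + 1 ≤ K := le_max_left _ _
    linarith
  · exact ⟨a, ha0, fun x _ => by dsimp only; split <;> [exact le_refl a; exact ha0]⟩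

/-- Theorem 1: for `γ < 1`, `γ ≠ 0`, the infimum of `λ₁` over
`A_γ = {q ≥ 0 : ∫₀¹ q^γ = 1}` is `−∞`. -/
theorem stmt14 (k0 k1 : ℝ) (γ : ℝ) (hγ : γ < 1) (hγ0 : γ ≠ 0) :
    ∀ M : ℝ, ∃ q : ℝ → ℝ,
      (∀ x, 0 ≤ q x) ∧
      IntervalIntegrable q volume 0 1 ∧
      (∫ x in (0:ℝ)..1, (q x) ^ γ) = 1 ∧
      sInf (rayleighSet k0 k1 q) < M := by
  intro M
  have hconstr : ∃ q : ℝ → ℝ, (∀ x, 0 ≤ q x) ∧ IntervalIntegrable q volume 0 1 ∧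
      (∫ x in (0:ℝ)..1, (q x) ^ γ) = 1 ∧
      (∫ x in (0:ℝ)..1, q x) > k0^2 + k1^2 - M ∧
      (∃ C : ℝ, 0 ≤ C ∧ ∀ x ∈ Icc (0:ℝ) 1, q x ≤ C) := by
    rcases lt_or_gt_of_ne hγ0 with hneg | hpos
    · exact construct_neg k0 k1 γ M hγ0 hneg
    · exact construct_pos k0 k1 γ M hγ hpos
  obtain ⟨q, hq0, hqi, hnorm, hbig, C, hC, hqC⟩ := hconstr
  exact ⟨q, hq0, hqi, hnorm, key k0 k1 M q hqi hbig C hC hqC⟩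
end

section
/- Let γ > 1 and define M_γ = sup{ λ₁(q) : q ∈ Γ_γ }, where Γ_γ is the W₂⁻¹[0,1]-closure of A_γ = { q ∈ L¹[0,1] : q ≥ 0, ∫₀¹ q^γ dx = 1 } and λ₁ is as above. Then M_γ = λ₁(0), the first eigenvalue of y'' + λy = 0 with the Robin conditions y'(0) − k₀²y(0) = y'(1) + k₁²y(1) = 0. -/
open MeasureTheory Real Filter Set

set_option maxHeartbeats 1000000

private lemma ray_nonempty (k0 k1 : ℝ) (q : ℝ → ℝ) (hq : IntervalIntegrable q volume 0 1) :
    (rayleighSet k0 k1 q).Nonempty := by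
  refine ⟨_, (fun _ => 1), (fun _ => 0), fun x _ => hasDerivAt_const x 1, ?_, ?_, ?_, rfl⟩
  · simpa using intervalIntegrable_const (c := (0:ℝ)) (μ := volume) (a := (0:ℝ)) (b := 1)
  · simpa using hq
  · simp

private lemma ray0_nonneg (k0 k1 : ℝ) :
    ∀ t ∈ rayleighSet k0 k1 (fun _ => 0), 0 ≤ t := by
  rintro t ⟨y, yd, hy, h2, h3, h4, rfl⟩
  have hA : 0 ≤ ∫ x in (0:ℝ)..1, (y x)^2 :=
    intervalIntegral.integral_nonneg zero_le_one (fun x _ => sq_nonneg _)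
  have hD : 0 ≤ ∫ x in (0:ℝ)..1, (yd x)^2 :=
    intervalIntegral.integral_nonneg zero_le_one (fun x _ => sq_nonneg _)
  have h0 : (∫ x in (0:ℝ)..1, (fun _ => (0:ℝ)) x * (y x)^2) = 0 := by simp
  rw [h0]
  apply div_nonneg _ hA
  have := sq_nonneg (y 0); have := sq_nonneg (y 1)
  have := sq_nonneg k0; have := sq_nonneg k1
  nlinarith

private lemma ray0_bddBelow (k0 k1 : ℝ) : BddBelow (rayleighSet k0 k1 (fun _ => 0)) :=
  ⟨0, fun t ht => ray0_nonneg k0 k1 t ht⟩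

private lemma lam_nonneg (k0 k1 : ℝ) : 0 ≤ sInf (rayleighSet k0 k1 (fun _ => 0)) :=
  le_csInf (ray_nonempty k0 k1 _ (by simpa using intervalIntegrable_const (c := (0:ℝ))))
    (ray0_nonneg k0 k1)

/-- Elementary Cauchy–Schwarz: `(∫ |f|)² ≤ ∫ f²` on `[0,1]`. -/
private lemma sq_integral_abs_le {yd : ℝ → ℝ}
    (hi : IntervalIntegrable yd volume 0 1)
    (hi2 : IntervalIntegrable (fun x => (yd x)^2) volume 0 1) :
    (∫ x in (0:ℝ)..1, |yd x|)^2 ≤ ∫ x in (0:ℝ)..1, (yd x)^2 := by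
  set I := ∫ x in (0:ℝ)..1, |yd x| with hIdef
  set B := ∫ x in (0:ℝ)..1, (yd x)^2 with hBdef
  have hInn : 0 ≤ I := intervalIntegral.integral_nonneg zero_le_one (fun x _ => abs_nonneg _)
  have hBnn : 0 ≤ B := intervalIntegral.integral_nonneg zero_le_one (fun x _ => sq_nonneg _)
  have key : ∀ ε : ℝ, 0 < ε → I ≤ ε/2 + B/(2*ε) := by
    intro ε hε
    have h1 : I ≤ ∫ x in (0:ℝ)..1, (ε/2 + (yd x)^2/(2*ε)) := by
      apply intervalIntegral.integral_mono_on zero_le_one hi.abs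
      · exact intervalIntegrable_const.add (hi2.div_const _)
      · intro x _
        have hd : |yd x| ≤ (ε^2 + (yd x)^2)/(2*ε) := by
          rw [le_div_iff₀ (by positivity)]
          nlinarith [sq_nonneg (|yd x| - ε), sq_abs (yd x)]
        have he : (ε^2 + (yd x)^2)/(2*ε) = ε/2 + (yd x)^2/(2*ε) := by
          field_simp
        linarith
    have h2 : (∫ x in (0:ℝ)..1, (ε/2 + (yd x)^2/(2*ε))) = ε/2 + B/(2*ε) := by
      rw [intervalIntegral.integral_add intervalIntegrable_const (hi2.div_const _),
        intervalIntegral.integral_div]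
      simp [hBdef]
    linarith [h1, h2.le, h2.ge]
  rcases eq_or_lt_of_le hInn with h0 | h0
  · simpa [← h0] using hBnn
  · have hk := key I h0
    have hx : B/(2*I)*(2*I) = B := div_mul_cancel₀ _ (by positivity)
    nlinarith [mul_le_mul_of_nonneg_right hk (by positivity : (0:ℝ) ≤ 2*I), hx]

/-- Sobolev-type bound: `y(x)² ≤ 2∫y² + 2∫y'²` on `[0,1]`. -/
private lemma sobolev_bound {y yd : ℝ → ℝ}
    (hy : ∀ x ∈ Set.Icc (0:ℝ) 1, HasDerivAt y (yd x) x)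
    (hi2 : IntervalIntegrable (fun x => (yd x)^2) volume 0 1) :
    ∀ x ∈ Set.Icc (0:ℝ) 1,
      (y x)^2 ≤ 2*(∫ s in (0:ℝ)..1, (y s)^2) + 2*(∫ s in (0:ℝ)..1, (yd s)^2) := by
  have huIcc : Set.uIcc (0:ℝ) 1 = Set.Icc 0 1 := Set.uIcc_of_le zero_le_one
  have hIoc : Set.uIoc (0:ℝ) 1 = Set.Ioc (0:ℝ) 1 := Set.uIoc_of_le zero_le_one
  have hyc : ContinuousOn y (Set.Icc (0:ℝ) 1) :=
    fun t ht => (hy t ht).continuousAt.continuousWithinAt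
  have hi2' : IntegrableOn (fun x => (yd x)^2) (Set.Ioc (0:ℝ) 1) volume := by
    rw [intervalIntegrable_iff, hIoc] at hi2; exact hi2
  have hydm : AEStronglyMeasurable yd (volume.restrict (Set.Ioc (0:ℝ) 1)) := by
    have hae : ∀ᵐ t ∂(volume.restrict (Set.Ioc (0:ℝ) 1)), deriv y t = yd t := by
      refine (ae_restrict_iff' measurableSet_Ioc).2 (ae_of_all _ ?_)
      intro t ht
      exact (hy t ⟨ht.1.le, ht.2⟩).deriv
    exact (measurable_deriv y).aestronglyMeasurable.congr hae
  have hyd_int : IntervalIntegrable yd volume 0 1 := by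
    rw [intervalIntegrable_iff, hIoc]
    have h1 : IntegrableOn (fun _ : ℝ => (1:ℝ)) (Set.Ioc (0:ℝ) 1) volume :=
      integrableOn_const measure_Ioc_lt_top.ne
    have hg : IntegrableOn (fun x => (1 + (yd x)^2)/2) (Set.Ioc (0:ℝ) 1) volume :=
      (h1.add hi2').div_const 2
    refine Integrable.mono' hg hydm (ae_of_all _ (fun t => ?_))
    rw [Real.norm_eq_abs]
    nlinarith [sq_nonneg (|yd t| - 1), sq_abs (yd t)]
  set A := ∫ s in (0:ℝ)..1, (y s)^2 with hAdef
  set B := ∫ s in (0:ℝ)..1, (yd s)^2 with hBdef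
  intro x hx
  have hpoint : ∀ s ∈ Set.Icc (0:ℝ) 1, (y x)^2 ≤ 2*(y s)^2 + 2*B := by
    intro s hs
    have hsub : Set.uIcc s x ⊆ Set.uIcc (0:ℝ) 1 := by
      rw [huIcc]; exact Set.uIcc_subset_Icc hs hx
    have ftc : ∫ t in s..x, yd t = y x - y s := by
      apply intervalIntegral.integral_eq_sub_of_hasDerivAt
      · intro t ht
        exact hy t (by rw [← huIcc]; exact hsub ht)
      · exact hyd_int.mono_set hsub
    have hsubIoc : Set.uIoc s x ⊆ Set.uIoc (0:ℝ) 1 := by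
      rw [hIoc]
      rw [Set.uIoc]
      apply Set.Ioc_subset_Ioc
      · exact le_min hs.1 hx.1
      · exact max_le hs.2 hx.2
    have h1 : |y x - y s| ≤ ∫ t in (0:ℝ)..1, |yd t| := by
      rw [← ftc]
      calc |∫ t in s..x, yd t| ≤ abs (∫ t in s..x, |yd t|) := by
            simpa [Real.norm_eq_abs] using
              intervalIntegral.norm_integral_le_abs_integral_norm
                (f := yd) (a := s) (b := x) (μ := volume)
        _ ≤ abs (∫ t in (0:ℝ)..1, |yd t|) :=
            intervalIntegral.abs_integral_mono_interval hsubIoc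
              (ae_of_all _ (fun t => abs_nonneg _)) hyd_int.abs
        _ = ∫ t in (0:ℝ)..1, |yd t| := abs_of_nonneg
              (intervalIntegral.integral_nonneg zero_le_one (fun t _ => abs_nonneg _))
    have h2 : (y x - y s)^2 ≤ B := by
      have := sq_integral_abs_le hyd_int hi2
      have h3 : (y x - y s)^2 ≤ (∫ t in (0:ℝ)..1, |yd t|)^2 := by
        rw [← sq_abs (y x - y s)]
        exact pow_le_pow_left₀ (abs_nonneg _) h1 2
      linarith
    nlinarith [h2, sq_nonneg (y s - (y x - y s))]
  have hyint : IntervalIntegrable (fun s => (y s)^2) volume 0 1 := by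
    apply ContinuousOn.intervalIntegrable
    rw [huIcc]; exact hyc.pow 2
  have := intervalIntegral.integral_mono_on zero_le_one
    (intervalIntegrable_const (c := (y x)^2))
    (((hyint.const_mul 2).add intervalIntegrable_const)) hpoint
  calc (y x)^2 = ∫ _ in (0:ℝ)..1, (y x)^2 := by simp
    _ ≤ ∫ s in (0:ℝ)..1, (2*(y s)^2 + 2*B) := this
    _ = 2*A + 2*B := by
        rw [intervalIntegral.integral_add (hyint.const_mul 2) intervalIntegrable_const,
          intervalIntegral.integral_const_mul]
        simp [hAdef]

/-- Antitonicity: `λ₁(q) ≤ λ₁(0)` for `q ≥ 0`. -/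
private lemma partA (k0 k1 : ℝ) {q : ℝ → ℝ} (hq0 : ∀ x, 0 ≤ q x)
    (hqi : IntervalIntegrable q volume 0 1) :
    sInf (rayleighSet k0 k1 q) ≤ sInf (rayleighSet k0 k1 (fun _ => 0)) := by
  by_cases hbd : BddBelow (rayleighSet k0 k1 q)
  · apply le_csInf (ray_nonempty k0 k1 _ (by simpa using intervalIntegrable_const (c := (0:ℝ))))
    rintro b ⟨y, yd, hy, h2, h3, h4, rfl⟩
    have hycont : ContinuousOn y (Set.Icc (0:ℝ) 1) :=
      fun t ht => (hy t ht).continuousAt.continuousWithinAt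
    have hyc : ContinuousOn (fun x => (y x)^2) (Set.uIcc (0:ℝ) 1) := by
      rw [Set.uIcc_of_le zero_le_one]
      exact hycont.pow 2
    have hqy : IntervalIntegrable (fun x => q x * (y x)^2) volume 0 1 :=
      hqi.mul_continuousOn hyc
    have ha : ((∫ x in (0:ℝ)..1, (yd x)^2) + k0^2 * (y 0)^2 + k1^2 * (y 1)^2
          - ∫ x in (0:ℝ)..1, q x * (y x)^2) / (∫ x in (0:ℝ)..1, (y x)^2)
        ∈ rayleighSet k0 k1 q := ⟨y, yd, hy, h2, hqy, h4, rfl⟩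
    refine le_trans (csInf_le hbd ha) ?_
    have hA : 0 < ∫ x in (0:ℝ)..1, (y x)^2 :=
      lt_of_le_of_ne (intervalIntegral.integral_nonneg zero_le_one (fun x _ => sq_nonneg _))
        (Ne.symm h4)
    have hQ : 0 ≤ ∫ x in (0:ℝ)..1, q x * (y x)^2 :=
      intervalIntegral.integral_nonneg zero_le_one
        (fun x _ => mul_nonneg (hq0 x) (sq_nonneg _))
    have h0 : (∫ x in (0:ℝ)..1, (fun _ => (0:ℝ)) x * (y x)^2) = 0 := by simp
    rw [h0]
    apply (div_le_div_iff_of_pos_right hA).2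
    linarith
  · rw [Real.sInf_of_not_bddBelow hbd]
    exact lam_nonneg k0 k1

/-- The spike potential `n^{1/γ} 𝟙_{x ≤ 1/n}`. -/
private noncomputable def spike (γ : ℝ) (n : ℕ) : ℝ → ℝ :=
  Set.indicator {x : ℝ | x ≤ ((n:ℝ))⁻¹} (fun _ => (n:ℝ)^(1/γ))

private lemma spike_nonneg (γ : ℝ) (n : ℕ) : ∀ x, 0 ≤ spike γ n x := by
  intro x
  unfold spike
  by_cases h : x ∈ {x : ℝ | x ≤ ((n:ℝ))⁻¹}
  · rw [Set.indicator_of_mem h]; positivity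
  · rw [Set.indicator_of_notMem h]

private lemma spike_integrable (γ : ℝ) (n : ℕ) :
    IntervalIntegrable (spike γ n) volume 0 1 := by
  rw [intervalIntegrable_iff]
  unfold spike
  refine (integrable_indicator_iff
    (measurableSet_Iic : MeasurableSet (Set.Iic ((n:ℝ))⁻¹))).2 ?_
  refine integrableOn_const (ne_of_lt ?_)
  rw [Measure.restrict_apply measurableSet_Iic]
  refine lt_of_le_of_lt (measure_mono Set.inter_subset_right) ?_
  rw [Set.uIoc_of_le zero_le_one]
  exact measure_Ioc_lt_top

private lemma spike_integral (γ : ℝ) {n : ℕ} (hn : 1 ≤ n) :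
    ∫ x in (0:ℝ)..1, spike γ n x = (n:ℝ)^(1/γ) * (n:ℝ)⁻¹ := by
  have hn0 : (0:ℝ) < n := by exact_mod_cast hn
  have hmem : ((n:ℝ))⁻¹ ∈ Set.Icc (0:ℝ) 1 :=
    ⟨by positivity, inv_le_one_of_one_le₀ (by exact_mod_cast hn)⟩
  unfold spike
  rw [intervalIntegral.integral_indicator hmem]
  simp [mul_comm]

private lemma spike_rpow {γ : ℝ} (hγ : 1 < γ) {n : ℕ} (hn : 1 ≤ n) :
    ∫ x in (0:ℝ)..1, (spike γ n x) ^ γ = 1 := by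
  have hγ0 : (0:ℝ) < γ := by linarith
  have hn0 : (0:ℝ) < n := by exact_mod_cast hn
  have hmem : ((n:ℝ))⁻¹ ∈ Set.Icc (0:ℝ) 1 :=
    ⟨by positivity, inv_le_one_of_one_le₀ (by exact_mod_cast hn)⟩
  have hpt : ∀ x, (spike γ n x) ^ γ
      = Set.indicator {x : ℝ | x ≤ ((n:ℝ))⁻¹} (fun _ => (n:ℝ)) x := by
    intro x
    unfold spike
    by_cases h : x ∈ {x : ℝ | x ≤ ((n:ℝ))⁻¹}
    · rw [Set.indicator_of_mem h, Set.indicator_of_mem h, ← Real.rpow_mul hn0.le,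
        one_div_mul_cancel (ne_of_gt hγ0), Real.rpow_one]
    · rw [Set.indicator_of_notMem h, Set.indicator_of_notMem h,
        Real.zero_rpow (ne_of_gt hγ0)]
  rw [show (fun x => (spike γ n x) ^ γ) = _ from funext hpt]
  rw [intervalIntegral.integral_indicator hmem]
  simp [hn0.ne']

/-- Lower bound for the Rayleigh quotients of the spike potential. -/
private lemma partB (k0 k1 : ℝ) {γ : ℝ} (hγ : 1 < γ) {n : ℕ} (hn : 1 ≤ n)
    (hc1 : 2*((n:ℝ)^(1/γ-1)) ≤ 1) :
    ∀ r ∈ rayleighSet k0 k1 (spike γ n),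
      (1 - 2*((n:ℝ)^(1/γ-1))) * sInf (rayleighSet k0 k1 (fun _ => 0))
        - 2*((n:ℝ)^(1/γ-1)) ≤ r := by
  set lam := sInf (rayleighSet k0 k1 (fun _ => 0)) with hlamdef
  set c := (n:ℝ)^(1/γ-1) with hcdef
  have hγ0 : (0:ℝ) < γ := by linarith
  have hn0 : (0:ℝ) < n := by exact_mod_cast hn
  have hc0 : 0 ≤ c := Real.rpow_nonneg hn0.le _
  rintro r ⟨y, yd, hy, h2, h3, h4, rfl⟩
  set A := ∫ x in (0:ℝ)..1, (y x)^2 with hAdef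
  set D := ∫ x in (0:ℝ)..1, (yd x)^2 with hDdef
  set Q := ∫ x in (0:ℝ)..1, spike γ n x * (y x)^2 with hQdef
  have hA : 0 < A :=
    lt_of_le_of_ne (intervalIntegral.integral_nonneg zero_le_one (fun x _ => sq_nonneg _))
      (Ne.symm h4)
  have hD : 0 ≤ D := intervalIntegral.integral_nonneg zero_le_one (fun x _ => sq_nonneg _)
  have hzero : ((D + k0^2*(y 0)^2 + k1^2*(y 1)^2
        - ∫ x in (0:ℝ)..1, (fun _ => (0:ℝ)) x * (y x)^2) / A)
      ∈ rayleighSet k0 k1 (fun _ => 0) :=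
    ⟨y, yd, hy, h2, by simpa using intervalIntegrable_const (c := (0:ℝ)), h4, rfl⟩
  have hR0 : lam ≤ (D + k0^2*(y 0)^2 + k1^2*(y 1)^2)/A := by
    have h := csInf_le (ray0_bddBelow k0 k1) hzero
    simpa using h
  have hsob := sobolev_bound hy h2
  have hQle : Q ≤ c * (2*A + 2*D) := by
    have hmono : Q ≤ ∫ x in (0:ℝ)..1, spike γ n x * (2*A+2*D) := by
      apply intervalIntegral.integral_mono_on zero_le_one h3
        ((spike_integrable γ n).mul_const _)
      intro x hx
      exact mul_le_mul_of_nonneg_left (hsob x hx) (spike_nonneg γ n x)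
    have heq : (∫ x in (0:ℝ)..1, spike γ n x * (2*A+2*D))
        = ((n:ℝ)^(1/γ) * (n:ℝ)⁻¹) * (2*A+2*D) := by
      rw [intervalIntegral.integral_mul_const, spike_integral γ hn]
    have hcc : (n:ℝ)^(1/γ) * (n:ℝ)⁻¹ = c := by
      rw [hcdef, Real.rpow_sub hn0, Real.rpow_one]; ring
    rw [heq, hcc] at hmono
    exact hmono
  have hK0 : 0 ≤ k0^2*(y 0)^2 := by positivity
  have hK1 : 0 ≤ k1^2*(y 1)^2 := by positivity
  have hlam0 : 0 ≤ lam := lam_nonneg k0 k1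
  rw [le_div_iff₀ hA] at hR0
  rw [le_div_iff₀ hA]
  nlinarith [hR0, hQle, hD, hc0, hc1, hlam0, hK0, hK1, hA.le,
    mul_nonneg (by linarith : (0:ℝ) ≤ 1 - 2*c)
      (by linarith : (0:ℝ) ≤ D + k0^2*(y 0)^2 + k1^2*(y 1)^2 - lam*A),
    mul_nonneg hc0 hK0, mul_nonneg hc0 hK1, mul_nonneg hc0 hD]

/-- Theorem 2: for `γ > 1`, `M_γ = sup {λ₁ q : q ∈ A_γ}` equals `λ₁(0)`, the first
eigenvalue of `y'' + λ y = 0` with the Robin boundary conditions. -/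
theorem stmt15 (k0 k1 : ℝ) (γ : ℝ) (hγ : 1 < γ) :
    sSup { t : ℝ | ∃ q : ℝ → ℝ,
        (∀ x, 0 ≤ q x) ∧
        IntervalIntegrable q volume 0 1 ∧
        (∫ x in (0:ℝ)..1, (q x) ^ γ) = 1 ∧
        t = sInf (rayleighSet k0 k1 q) }
      = sInf (rayleighSet k0 k1 (fun _ => 0)) := by
  have hγ0 : (0:ℝ) < γ := by linarith
  set S := { t : ℝ | ∃ q : ℝ → ℝ,
        (∀ x, 0 ≤ q x) ∧
        IntervalIntegrable q volume 0 1 ∧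
        (∫ x in (0:ℝ)..1, (q x) ^ γ) = 1 ∧
        t = sInf (rayleighSet k0 k1 q) } with hSdef
  set lam := sInf (rayleighSet k0 k1 (fun _ => 0)) with hlamdef
  have hlam0 : 0 ≤ lam := lam_nonneg k0 k1
  have hub : ∀ t ∈ S, t ≤ lam := by
    rintro t ⟨q, hq0, hqi, _, rfl⟩
    exact partA k0 k1 hq0 hqi
  have hmem : ∀ n : ℕ, 1 ≤ n → sInf (rayleighSet k0 k1 (spike γ n)) ∈ S :=
    fun n hn => ⟨spike γ n, spike_nonneg γ n, spike_integrable γ n, spike_rpow hγ hn, rfl⟩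
  have hne : S.Nonempty := ⟨_, hmem 1 le_rfl⟩
  have hbdd : BddAbove S := ⟨lam, hub⟩
  refine le_antisymm (csSup_le hne hub) ?_
  refine le_of_forall_sub_le (fun ε hε => ?_)
  have hδ : 0 < min (1/2 : ℝ) (ε/(2*(lam+1))) := lt_min (by norm_num) (by positivity)
  obtain ⟨n, hn1, hcn⟩ : ∃ n : ℕ, 1 ≤ n ∧ (n:ℝ)^(1/γ - 1) < min (1/2) (ε/(2*(lam+1))) := by
    have hexp : (0:ℝ) < 1 - 1/γ := by
      have h1 : 1/γ < 1 := (div_lt_one hγ0).2 hγ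
      linarith
    have htend : Tendsto (fun m : ℕ => ((m:ℝ))^(1/γ-1)) atTop (nhds 0) := by
      have h := (tendsto_rpow_neg_atTop hexp).comp (tendsto_natCast_atTop_atTop (R := ℝ))
      simpa [Function.comp_def, neg_sub] using h
    exact ((eventually_ge_atTop 1).and (htend.eventually_lt_const hδ)).exists
  set c := (n:ℝ)^(1/γ - 1) with hcdef
  have hn0 : (0:ℝ) < n := by exact_mod_cast hn1
  have hc0 : 0 ≤ c := Real.rpow_nonneg hn0.le _
  have hc1 : 2*c ≤ 1 := by
    have h := lt_of_lt_of_le hcn (min_le_left _ _)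
    linarith
  have hcε : 2*c*(lam+1) ≤ ε := by
    have h2 := lt_of_lt_of_le hcn (min_le_right _ _)
    rw [lt_div_iff₀ (by positivity : (0:ℝ) < 2*(lam+1))] at h2
    nlinarith
  have hlb : lam - ε ≤ sInf (rayleighSet k0 k1 (spike γ n)) := by
    refine le_trans (by nlinarith : lam - ε ≤ (1 - 2*c) * lam - 2*c) ?_
    exact le_csInf (ray_nonempty _ _ _ (spike_integrable γ n)) (partB k0 k1 hγ hn1 hc1)
  calc lam - ε ≤ sInf (rayleighSet k0 k1 (spike γ n)) := hlb
    _ ≤ sSup S := le_csSup hbdd (hmem n hn1)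
end
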